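/- arXiv:2207.10370 — 2 statements merged into one kernel-verified Lean document; each statement's English description precedes it below -/
import Mathlib

section
/- For all real numbers t < T, x, k and all σ > 0, the Black–Scholes price is the expectation of the call payoff under a lognormal with total variance σ²(T−t): ∫_ℝ max(e^{x + σ√(T−t)·z − σ²(T−t)/2} − e^k, 0) dγ(z) = BS(t,T,x,k,σ), where γ is the standard Gaussian measure on ℝ. -/
noncomputable section

/-- Standard normal density. -/
def phi (z : ℝ) : ℝ := (Real.sqrt (2 * Real.pi))⁻¹ * Real.exp (-z ^ 2 / 2)

/-- Standard normal cumulative distribution function. -/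
def N (y : ℝ) : ℝ := ∫ z in Set.Iic y, phi z

/-- Black–Scholes auxiliary quantity `d₁`. -/
def d1 (t T x k σ : ℝ) : ℝ :=
  (x - k) / (σ * Real.sqrt (T - t)) + σ * Real.sqrt (T - t) / 2

/-- Black–Scholes auxiliary quantity `d₂`. -/
def d2 (t T x k σ : ℝ) : ℝ :=
  (x - k) / (σ * Real.sqrt (T - t)) - σ * Real.sqrt (T - t) / 2

/-- Black–Scholes call price with log-spot `x`, log-strike `k`,
time to maturity `T - t` and volatility `σ`. -/
def BS (t T x k σ : ℝ) : ℝ :=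
  Real.exp x * N (d1 t T x k σ) - Real.exp k * N (d2 t T x k σ)

/-!
With `s = σ√(T-t)` the payoff is positive exactly for `z > -d₂`, where `d₂ = (x-k)/s - s/2`.
On that half-line the strike term integrates to `e^k N(d₂)`, and the spot term is handled by
completing the square, `φ(z) e^{sz - s²/2} = φ(z - s)`: the exponential tilt shifts the Gaussian
by `s`, turning the half-line `z > -d₂` into `z > -(d₂ + s) = -d₁` and giving `e^x N(d₁)`.
-/

open MeasureTheory Set ProbabilityTheory Real

lemma phi_eq_gaussianPDFReal (z : ℝ) : phi z = gaussianPDFReal 0 1 z := by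
  simp [phi, gaussianPDFReal, neg_div]

lemma integrable_phi : Integrable phi :=
  (integrable_gaussianPDFReal 0 1).congr (ae_of_all _ fun z => (phi_eq_gaussianPDFReal z).symm)

lemma integral_gaussianReal_eq_integral_phi_smul {E : Type*} [NormedAddCommGroup E]
    [NormedSpace ℝ E] (f : ℝ → E) :
    ∫ z, f z ∂gaussianReal 0 1 = ∫ z, phi z • f z := by
  simp only [integral_gaussianReal_eq_integral_smul one_ne_zero, phi_eq_gaussianPDFReal]

lemma phi_mul_exp (s z : ℝ) : phi z * exp (s * z - s ^ 2 / 2) = phi (z - s) := by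
  rw [phi, phi, mul_assoc, ← exp_add]
  ring_nf

lemma setIntegral_Ioi_comp_sub_right {E : Type*} [NormedAddCommGroup E] [NormedSpace ℝ E]
    (f : ℝ → E) (a s : ℝ) :
    ∫ z in Ioi a, f (z - s) = ∫ z in Ioi (a - s), f z := by
  have hpre : (fun z => z - s) ⁻¹' Ioi (a - s) = Ioi a := by
    ext z
    simp
  rw [← hpre]
  exact (measurePreserving_sub_right volume s).setIntegral_preimage_emb
    (measurableEmbedding_subRight s) f _

lemma setIntegral_Ioi_phi (b : ℝ) : ∫ z in Ioi b, phi z = N (-b) := by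
  rw [N, ← integral_comp_neg_Ioi]
  simp [phi]

lemma phi_mul_callPayoff (x k s z : ℝ) (hs : 0 < s) :
    phi z * max (exp (x + s * z - s ^ 2 / 2) - exp k) 0 =
      (Ioi (-((x - k) / s - s / 2))).indicator
        (fun z => exp x * phi (z - s) - exp k * phi z) z := by
  have hspot : phi z * exp (x + s * z - s ^ 2 / 2) = exp x * phi (z - s) := by
    rw [← phi_mul_exp, show x + s * z - s ^ 2 / 2 = x + (s * z - s ^ 2 / 2) by ring, exp_add]
    ring
  have hexercise : z ∈ Ioi (-((x - k) / s - s / 2)) ↔ k < x + s * z - s ^ 2 / 2 := by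
    have hscale : s * ((x - k) / s - s / 2 + z) = x + s * z - s ^ 2 / 2 - k := by
      field_simp
      ring
    rw [mem_Ioi, neg_lt_iff_pos_add', ← mul_pos_iff_of_pos_left hs, hscale, sub_pos]
  by_cases h : k < x + s * z - s ^ 2 / 2
  · rw [indicator_of_mem (hexercise.2 h), max_eq_left (sub_nonneg.2 (exp_le_exp.2 h.le)),
      mul_sub, hspot]
    ring
  · rw [indicator_of_notMem (mt hexercise.1 h),
      max_eq_right (sub_nonpos.2 (exp_le_exp.2 (not_lt.1 h))), mul_zero]

theorem integral_callPayoff_gaussianReal (x k s : ℝ) (hs : 0 < s) :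
    ∫ z, max (exp (x + s * z - s ^ 2 / 2) - exp k) 0 ∂gaussianReal 0 1 =
      exp x * N ((x - k) / s + s / 2) - exp k * N ((x - k) / s - s / 2) := by
  set d := (x - k) / s - s / 2
  have hspot : Integrable fun z => exp x * phi (z - s) :=
    (integrable_phi.comp_sub_right s).const_mul _
  have hstrike : Integrable fun z => exp k * phi z := integrable_phi.const_mul _
  calc ∫ z, max (exp (x + s * z - s ^ 2 / 2) - exp k) 0 ∂gaussianReal 0 1
      = ∫ z in Ioi (-d), (exp x * phi (z - s) - exp k * phi z) := by
        simp only [integral_gaussianReal_eq_integral_phi_smul, smul_eq_mul,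
          phi_mul_callPayoff x k s _ hs]
        exact integral_indicator measurableSet_Ioi
    _ = exp x * (∫ z in Ioi (-d), phi (z - s)) - exp k * ∫ z in Ioi (-d), phi z := by
        rw [integral_sub hspot.integrableOn hstrike.integrableOn, integral_const_mul,
          integral_const_mul]
    _ = exp x * N ((x - k) / s + s / 2) - exp k * N d := by
        rw [setIntegral_Ioi_comp_sub_right, setIntegral_Ioi_phi, setIntegral_Ioi_phi, neg_neg,
          neg_sub', neg_neg]
        congr 3
        simp only [d]
        ring

theorem bs_price_as_gaussian_expectation (t T x k σ : ℝ) (htT : t < T) (hσ : 0 < σ) :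
    ∫ z, max (Real.exp (x + σ * Real.sqrt (T - t) * z - σ ^ 2 * (T - t) / 2) - Real.exp k) 0
        ∂(ProbabilityTheory.gaussianReal 0 1) = BS t T x k σ := by
  have hs : 0 < σ * √(T - t) := mul_pos hσ (sqrt_pos.2 (sub_pos.2 htT))
  have hvar : σ ^ 2 * (T - t) = (σ * √(T - t)) ^ 2 := by
    rw [mul_pow, sq_sqrt (sub_nonneg.2 htT.le)]
  rw [hvar, integral_callPayoff_gaussianReal x k _ hs]
  rfl
end
end

section
/- For all real numbers t < T, x and all κ > 0, σ > 0, if the log-strike k satisfies the zero-vanna relation x − k = κ²(T−t)/2, then H(t,T,x,k,σ) := (∂³/∂x³ − ∂²/∂x²) BS(t,T,x,k,σ) = e^x φ(d1(t,T,x,k,σ)) · (σ² − κ²) / (2σ³√(T−t)). -/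
/-!
Write `s = σ √(T - t)`. Since `d₁ - d₂ = s` and `d₁ + d₂ = 2 (x - k) / s`, one has
`eˣ φ(d₁) = eᵏ φ(d₂)`, so the two density terms cancel in `∂ₓ BS` and the delta is `eˣ N(d₁)`.
Differentiating further, `∂ₓ² BS = eˣ N(d₁) + eˣ φ(d₁) / s` and
`(∂ₓ³ - ∂ₓ²) BS = eˣ φ(d₁) (1 - d₁ / s) / s`. Under the zero-vanna relation
`d₁ / s = (σ² + κ²) / (2 σ²)`, which gives the claimed value.
-/

noncomputable section

open Real

lemma continuous_phi : Continuous phi := by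
  unfold phi; fun_prop

lemma integrable_phi_s7 : MeasureTheory.Integrable phi := by
  have h := (integrable_exp_neg_mul_sq (b := 1 / 2) (by norm_num)).const_mul (√(2 * π))⁻¹
  convert h using 2 with z
  unfold phi; ring_nf

lemma hasDerivAt_phi (z : ℝ) : HasDerivAt phi (-z * phi z) z := by
  have h : HasDerivAt (fun z : ℝ => -z ^ 2 / 2) (-z) z := by
    simpa using ((hasDerivAt_pow 2 z).neg.div_const 2).congr_deriv (by ring)
  exact (h.exp.const_mul (√(2 * π))⁻¹).congr_deriv (by unfold phi; ring)

lemma hasDerivAt_N (y : ℝ) : HasDerivAt N (phi y) y := by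
  have hN : N = fun y => (∫ z in Set.Iic 0, phi z) + ∫ z in (0 : ℝ)..y, phi z := by
    funext y
    have := intervalIntegral.integral_Iic_sub_Iic integrable_phi_s7.integrableOn
      integrable_phi_s7.integrableOn (a := 0) (b := y)
    unfold N; linarith
  rw [hN]
  exact (intervalIntegral.integral_hasDerivAt_right integrable_phi_s7.intervalIntegrable
    continuous_phi.stronglyMeasurable.stronglyMeasurableAtFilter
    continuous_phi.continuousAt).const_add _

section

variable (t T k σ : ℝ)

/-- Also true when `σ √(T - t) = 0`, where `d₁` is constant and the inverse is `0`. -/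
lemma hasDerivAt_d1 (y : ℝ) :
    HasDerivAt (fun y => d1 t T y k σ) (σ * √(T - t))⁻¹ y := by
  simpa [d1, div_eq_mul_inv] using
    (((hasDerivAt_id y).sub_const k).div_const (σ * √(T - t))).add_const (σ * √(T - t) / 2)

lemma hasDerivAt_d2 (y : ℝ) :
    HasDerivAt (fun y => d2 t T y k σ) (σ * √(T - t))⁻¹ y := by
  simpa [d2, div_eq_mul_inv] using
    (((hasDerivAt_id y).sub_const k).div_const (σ * √(T - t))).sub_const (σ * √(T - t) / 2)

lemma hasDerivAt_exp_mul_N_d1 (y : ℝ) :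
    HasDerivAt (fun y => exp y * N (d1 t T y k σ))
      (exp y * N (d1 t T y k σ) + exp y * phi (d1 t T y k σ) / (σ * √(T - t))) y :=
  ((hasDerivAt_exp y).mul ((hasDerivAt_N _).comp y (hasDerivAt_d1 t T k σ y))).congr_deriv
    (by simp only [Function.comp_apply]; ring)

lemma hasDerivAt_exp_mul_phi_d1 (y : ℝ) :
    HasDerivAt (fun y => exp y * phi (d1 t T y k σ))
      (exp y * phi (d1 t T y k σ) * (1 - d1 t T y k σ / (σ * √(T - t)))) y :=
  ((hasDerivAt_exp y).mul ((hasDerivAt_phi _).comp y (hasDerivAt_d1 t T k σ y))).congr_deriv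
    (by simp only [Function.comp_apply]; ring)

end

lemma exp_mul_phi_d1_eq_exp_mul_phi_d2 {t T σ : ℝ} (k : ℝ) (hσ : σ ≠ 0) (htT : t < T) (y : ℝ) :
    exp y * phi (d1 t T y k σ) = exp k * phi (d2 t T y k σ) := by
  have hs : σ * √(T - t) ≠ 0 := mul_ne_zero hσ (sqrt_pos.mpr (sub_pos.mpr htT)).ne'
  simp only [phi, d1, d2, mul_left_comm (exp _), ← exp_add]
  generalize σ * √(T - t) = s at hs ⊢
  congr 2
  field_simp
  ring

lemma hasDerivAt_BS {t T σ : ℝ} (k : ℝ) (hσ : σ ≠ 0) (htT : t < T) (y : ℝ) :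
    HasDerivAt (fun y => BS t T y k σ) (exp y * N (d1 t T y k σ)) y := by
  have h1 := (hasDerivAt_N _).comp y (hasDerivAt_d1 t T k σ y)
  have h2 := (hasDerivAt_N _).comp y (hasDerivAt_d2 t T k σ y)
  exact ((hasDerivAt_exp y).mul h1).sub (h2.const_mul (exp k)) |>.congr_deriv
    (by simp only [Function.comp_apply]
        linear_combination (σ * √(T - t))⁻¹ * exp_mul_phi_d1_eq_exp_mul_phi_d2 k hσ htT y)

lemma iteratedDeriv_three_sub_two_BS {t T σ : ℝ} (k : ℝ) (hσ : σ ≠ 0) (htT : t < T) (x : ℝ) :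
    iteratedDeriv 3 (fun y => BS t T y k σ) x - iteratedDeriv 2 (fun y => BS t T y k σ) x =
      exp x * phi (d1 t T x k σ) * (1 - d1 t T x k σ / (σ * √(T - t))) / (σ * √(T - t)) := by
  have hBS : deriv (fun y => BS t T y k σ) = fun y => exp y * N (d1 t T y k σ) :=
    funext fun y => (hasDerivAt_BS k hσ htT y).deriv
  have hDelta : deriv (fun y => exp y * N (d1 t T y k σ)) = fun y =>
      exp y * N (d1 t T y k σ) + exp y * phi (d1 t T y k σ) / (σ * √(T - t)) :=
    funext fun y => (hasDerivAt_exp_mul_N_d1 t T k σ y).deriv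
  have hGamma : HasDerivAt (fun y =>
      exp y * N (d1 t T y k σ) + exp y * phi (d1 t T y k σ) / (σ * √(T - t))) _ x :=
    (hasDerivAt_exp_mul_N_d1 t T k σ x).add
      ((hasDerivAt_exp_mul_phi_d1 t T k σ x).div_const (σ * √(T - t)))
  simp only [iteratedDeriv_eq_iterate, Function.iterate_succ_apply', Function.iterate_zero_apply]
  rw [hBS, hDelta, hGamma.deriv]
  ring

theorem bs_H_zero_vanna_general (t T x k κ σ : ℝ) (htT : t < T) (hσ : 0 < σ)
    (hk : x - k = κ ^ 2 * (T - t) / 2) :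
    iteratedDeriv 3 (fun y => BS t T y k σ) x - iteratedDeriv 2 (fun y => BS t T y k σ) x =
      Real.exp x * phi (d1 t T x k σ) * (σ ^ 2 - κ ^ 2) / (2 * σ ^ 3 * Real.sqrt (T - t)) := by
  have hr : 0 < √(T - t) := sqrt_pos.mpr (sub_pos.mpr htT)
  have hd1 : 1 - d1 t T x k σ / (σ * √(T - t)) = (σ ^ 2 - κ ^ 2) / (2 * σ ^ 2) := by
    rw [d1, hk]
    field_simp
    rw [sq_sqrt (sub_pos.mpr htT).le]
    ring
  rw [iteratedDeriv_three_sub_two_BS k hσ.ne' htT, hd1]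
  field_simp

theorem bs_H_zero_vanna (t T x k κ σ : ℝ) (htT : t < T) (hκ : 0 < κ) (hσ : 0 < σ)
    (hk : x - k = κ ^ 2 * (T - t) / 2) :
    iteratedDeriv 3 (fun y => BS t T y k σ) x - iteratedDeriv 2 (fun y => BS t T y k σ) x =
      Real.exp x * phi (d1 t T x k σ) * (σ ^ 2 - κ ^ 2) / (2 * σ ^ 3 * Real.sqrt (T - t)) :=
  bs_H_zero_vanna_general t T x k κ σ htT hσ hk
end
end
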